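/- Let F be a field of characteristic not 2 with u(F) = 2^{n+1} such that every torsion (n+2)-fold Pfister form over F is hyperbolic, and let π be an anisotropic (n+1)-fold Pfister form such that π ⊥ -xπ is torsion for all x ∈ F*. Then xπ ≅ π for every x ∈ F*, i.e., π is universal up to isometry under scaling. -/

import Mathlib

open scoped BigOperators ENat Classical

namespace QF

variable {F : Type*} [Field F]

/-- Value of the diagonal quadratic form with coefficients `d` at the vector `v`. -/
def qval {ι : Type*} [Fintype ι] (d : ι → F) (v : ι → F) : F :=
  ∑ i, d i * v i ^ 2

/-- A (diagonal) quadratic form is isotropic if it has a nontrivial zero. -/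
def Isotropic {ι : Type*} [Fintype ι] (d : ι → F) : Prop :=
  ∃ v : ι → F, v ≠ 0 ∧ qval d v = 0

def Anisotropic {ι : Type*} [Fintype ι] (d : ι → F) : Prop :=
  ¬ Isotropic d

/-- Orthogonal sum of `n` copies of the form `d`. -/
def copies (n : ℕ) {ι : Type*} (d : ι → F) : Fin n × ι → F :=
  fun p => d p.2

/-- Orthogonal sum of two diagonal forms. -/
def sumForm {ι κ : Type*} (d : ι → F) (e : κ → F) : ι ⊕ κ → F :=
  Sum.elim d e

/-- A form is weakly isotropic if some multiple `n × q`, `n ≥ 1`, is isotropic. -/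
def WeaklyIsotropic {ι : Type*} [Fintype ι] (d : ι → F) : Prop :=
  ∃ n : ℕ, 1 ≤ n ∧ Isotropic (copies n d)

/-- Isometry of diagonal quadratic forms. -/
def Isometric {ι κ : Type*} [Fintype ι] [Fintype κ] (d : ι → F) (e : κ → F) : Prop :=
  ∃ f : (ι → F) ≃ₗ[F] (κ → F), ∀ v, qval e (f v) = qval d v

/-- The hyperbolic form of dimension `2m`, i.e. `m × ⟨1,-1⟩`. -/
def hypForm (F : Type*) [Field F] (m : ℕ) : Fin m ⊕ Fin m → F :=
  Sum.elim (fun _ => (1 : F)) (fun _ => (-1 : F))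

def Hyperbolic {ι : Type*} [Fintype ι] (d : ι → F) : Prop :=
  ∃ m : ℕ, Isometric d (hypForm F m)

/-- A form is torsion if some multiple `n × q`, `n ≥ 1`, is hyperbolic. -/
def Torsion {ι : Type*} [Fintype ι] (d : ι → F) : Prop :=
  ∃ n : ℕ, 1 ≤ n ∧ Hyperbolic (copies n d)

/-- `e` is a subform of `d` : `d ≅ e ⊥ τ` for some form `τ`. -/
def IsSubform {ι κ : Type*} [Fintype ι] [Fintype κ] (e : κ → F) (d : ι → F) : Prop :=
  ∃ (m : ℕ) (τ : Fin m → F), Isometric d (sumForm e τ)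

/-- `e` is similar to a subform of `d`. -/
def SimSubform {ι κ : Type*} [Fintype ι] [Fintype κ] (e : κ → F) (d : ι → F) : Prop :=
  ∃ c : F, c ≠ 0 ∧ IsSubform (fun i => c * e i) d

/-- The `ℓ`-fold Pfister form `⟨⟨a₁,…,a_ℓ⟩⟩ = ⊗ᵢ ⟨1, aᵢ⟩`, with coefficient
`∏ i ∈ S, a i` at the index `S : Finset (Fin ℓ)`. -/
def pfister {ℓ : ℕ} (a : Fin ℓ → F) : Finset (Fin ℓ) → F :=
  fun S => ∏ i ∈ S, a i

/-- `d` is a Pfister neighbor of the `ℓ`-fold Pfister form `⟨⟨a⟩⟩`. -/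
def IsPfisterNeighbor {ι : Type*} [Fintype ι] {ℓ : ℕ} (d : ι → F) (a : Fin ℓ → F) : Prop :=
  2 ^ ℓ < 2 * Fintype.card ι ∧ SimSubform d (pfister a)

/-- Witt equivalence of diagonal forms. -/
def WittEquiv {ι κ : Type*} [Fintype ι] [Fintype κ] (d : ι → F) (e : κ → F) : Prop :=
  ∃ m k : ℕ, Isometric (sumForm d (hypForm F m)) (sumForm e (hypForm F k))

/-- An ordering of the field `F`, given by its positive cone. -/
structure FieldOrdering (F : Type*) [Field F] where
  P : Set F
  add_mem : ∀ x y : F, x ∈ P → y ∈ P → x + y ∈ P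
  mul_mem : ∀ x y : F, x ∈ P → y ∈ P → x * y ∈ P
  total : ∀ x : F, x ∈ P ∨ -x ∈ P
  neg_one_notMem : (-1 : F) ∉ P

/-- The signature of a (nondegenerate diagonal) form at an ordering. -/
noncomputable def sgn {ι : Type*} [Fintype ι] (P : FieldOrdering F) (d : ι → F) : ℤ :=
  ∑ i, if d i ∈ P.P then 1 else -1

/-- The Harrison set `H(a) = {P : a >_P 0}`. -/
def Harrison (F : Type*) [Field F] (a : F) : Set (FieldOrdering F) :=
  {P | a ∈ P.P ∧ -a ∉ P.P}

/-- The Harrison topology on the space of orderings. -/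
instance orderingTopology (F : Type*) [Field F] : TopologicalSpace (FieldOrdering F) :=
  .generateFrom {s | ∃ a : F, a ≠ 0 ∧ s = Harrison F a}

/-- `F` satisfies SAP: every clopen subset of the space of orderings is a Harrison set. -/
def IsSAP (F : Type*) [Field F] : Prop :=
  ∀ s : Set (FieldOrdering F), IsClopen s → ∃ a : F, a ≠ 0 ∧ s = Harrison F a

/-- Totally indefinite: indefinite at every ordering of `F`. -/
def TotallyIndefinite {ι : Type*} [Fintype ι] (d : ι → F) : Prop :=
  ∀ P : FieldOrdering F, (sgn P d).natAbs < Fintype.card ι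

/-- The `u`-invariant: supremum of dimensions of anisotropic torsion forms. -/
noncomputable def uInv (F : Type*) [Field F] : ℕ∞ :=
  sSup {n : ℕ∞ | ∃ (m : ℕ) (d : Fin m → F), Anisotropic d ∧ Torsion d ∧ n = m}

/-- The Hasse number `ũ`: supremum of dimensions of anisotropic totally indefinite forms. -/
noncomputable def hasseNumber (F : Type*) [Field F] : ℕ∞ :=
  sSup {n : ℕ∞ | ∃ (m : ℕ) (d : Fin m → F), (∀ i, d i ≠ 0) ∧ Anisotropic d ∧
    TotallyIndefinite d ∧ n = m}

/-- `x` is a sum of `m` squares. -/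
def IsSumSqOf (m : ℕ) (x : F) : Prop :=
  ∃ f : Fin m → F, x = ∑ i, f i ^ 2

/-- The Pythagoras number of `F`. -/
noncomputable def pythNumber (F : Type*) [Field F] : ℕ∞ :=
  sInf {p : ℕ∞ | ∃ m : ℕ, p = m ∧ ∀ x : F, IsSumSq x → IsSumSqOf m x}

/-- Property `S₁`: for every torsion binary form `β` there is `n ≥ 1` with
`(n × ⟨1⟩) ⊥ β` isotropic. -/
def HasS1 (F : Type*) [Field F] : Prop :=
  ∀ β : Fin 2 → F, (∀ i, β i ≠ 0) → Torsion β →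
    ∃ n : ℕ, 1 ≤ n ∧ Isotropic (sumForm (fun _ : Fin n => (1 : F)) β)

/-- The Pythagorean closure of `F` inside an algebraic closure: the smallest
subfield containing `F` in which every sum of two squares is a square. -/
noncomputable def pythClosure (F : Type*) [Field F] : Subfield (AlgebraicClosure F) :=
  sInf {K | Set.range (algebraMap F (AlgebraicClosure F)) ⊆ K ∧
    ∀ x ∈ K, ∀ y ∈ K, ∃ z ∈ K, z ^ 2 = x ^ 2 + y ^ 2}

/-- The form `d` over `F` becomes isotropic over the Pythagorean closure of `F`. -/
def IsotropicOverPyth {ι : Type*} [Fintype ι] (d : ι → F) : Prop :=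
  ∃ v : ι → AlgebraicClosure F, (∀ i, v i ∈ pythClosure F) ∧ v ≠ 0 ∧
    ∑ i, algebraMap F (AlgebraicClosure F) (d i) * v i ^ 2 = 0

end QF

/-!
`π ⊥ -xπ` is a torsion form of dimension `2^(n+2) > u(F)`, hence isotropic, and since `π` is
anisotropic this writes `x = π(u) / π(z)` as a quotient of nonzero values of `π`. Pfister forms
are round: every nonzero value is a similarity factor. This goes by induction along
`⟨⟨a₀,…,aₗ⟩⟩ ≅ ρ ⊥ a₀ρ`, the key identity being `(1 + t)(ρ ⊥ tρ) ≅ ρ ⊥ tρ`. Similarity factors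
form a group, so `x` is one, i.e. `xπ ≅ π`.
-/

namespace QF

variable {F : Type*} [Field F] {ι κ ι' κ' : Type*}
  [Fintype ι] [Fintype κ] [Fintype ι'] [Fintype κ']

lemma qval_mul_left (c : F) (d : ι → F) (v : ι → F) :
    qval (fun i => c * d i) v = c * qval d v := by
  simp [qval, Finset.mul_sum, mul_assoc]

lemma qval_sumForm (d : ι → F) (e : κ → F) (w : ι ⊕ κ → F) :
    qval (sumForm d e) w = qval d (w ∘ Sum.inl) + qval e (w ∘ Sum.inr) := by
  simp [qval, sumForm, Fintype.sum_sum_type]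

lemma Anisotropic.eq_zero {d : ι → F} (h : Anisotropic d) {v : ι → F} (hv : qval d v = 0) :
    v = 0 := by
  by_contra hv0
  exact h ⟨v, hv0, hv⟩

namespace Isometric

lemma refl (d : ι → F) : Isometric d d :=
  ⟨LinearEquiv.refl F _, fun _ => rfl⟩

lemma symm {d : ι → F} {e : κ → F} (h : Isometric d e) : Isometric e d := by
  obtain ⟨f, hf⟩ := h
  exact ⟨f.symm, fun v => by rw [← hf, f.apply_symm_apply]⟩

lemma trans {d : ι → F} {e : κ → F} {g : ι' → F} (h₁ : Isometric d e) (h₂ : Isometric e g) :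
    Isometric d g := by
  obtain ⟨f₁, hf₁⟩ := h₁
  obtain ⟨f₂, hf₂⟩ := h₂
  exact ⟨f₁.trans f₂, fun v => by rw [LinearEquiv.trans_apply, hf₂, hf₁]⟩

lemma mul_left (c : F) {d : ι → F} {e : κ → F} (h : Isometric d e) :
    Isometric (fun i => c * d i) (fun k => c * e k) := by
  obtain ⟨f, hf⟩ := h
  exact ⟨f, fun v => by rw [qval_mul_left, qval_mul_left, hf]⟩

lemma sumForm {d : ι → F} {d' : ι' → F} {e : κ → F} {e' : κ' → F}
    (h₁ : Isometric d d') (h₂ : Isometric e e') :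
    Isometric (QF.sumForm d e) (QF.sumForm d' e') := by
  obtain ⟨f, hf⟩ := h₁
  obtain ⟨g, hg⟩ := h₂
  refine ⟨(LinearEquiv.sumArrowLequivProdArrow ι κ F F).trans
    ((f.prodCongr g).trans (LinearEquiv.sumArrowLequivProdArrow ι' κ' F F).symm), fun v => ?_⟩
  rw [qval_sumForm, qval_sumForm, ← hf, ← hg]
  rfl

lemma anisotropic {d : ι → F} {e : κ → F} (h : Isometric d e) (he : Anisotropic e) :
    Anisotropic d := by
  rintro ⟨v, hv, hq⟩
  obtain ⟨f, hf⟩ := h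
  exact he ⟨f v, by simpa using hv, by rw [hf, hq]⟩

lemma exists_qval_eq {d : ι → F} {e : κ → F} (h : Isometric d e) (w : κ → F) :
    ∃ v, qval d v = qval e w := by
  obtain ⟨f, hf⟩ := h
  exact ⟨f.symm w, by rw [← hf, f.apply_symm_apply]⟩

end Isometric

lemma isometric_comp_equiv (e : ι ≃ κ) (d : κ → F) : Isometric (fun i => d (e i)) d := by
  refine ⟨LinearEquiv.funCongrLeft F F e.symm, fun v => ?_⟩
  exact Fintype.sum_equiv e.symm _ _ fun k => by simp

lemma isometric_sumForm_comm (d : ι → F) (e : κ → F) :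
    Isometric (sumForm d e) (sumForm e d) := by
  have h := isometric_comp_equiv (Equiv.sumComm ι κ) (sumForm e d)
  convert h using 1
  funext p
  rcases p with i | k <;> rfl

lemma isometric_sq_mul {s : F} (hs : s ≠ 0) (d : ι → F) :
    Isometric (fun i => s ^ 2 * d i) d := by
  refine ⟨LinearEquiv.smulOfNeZero F (ι → F) s hs, fun v => ?_⟩
  refine Finset.sum_congr rfl fun i _ => ?_
  simp only [LinearEquiv.smulOfNeZero_apply, Pi.smul_apply, smul_eq_mul]
  ring

def similarityFactors (d : ι → F) : Set F :=
  {c | Isometric (fun i => c * d i) d}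

lemma Isometric.similarityFactors_subset {d : ι → F} {e : κ → F} (h : Isometric d e) :
    similarityFactors d ⊆ similarityFactors e :=
  fun _ hc => ((h.mul_left _).symm.trans hc).trans h

lemma Isometric.similarityFactors_eq {d : ι → F} {e : κ → F} (h : Isometric d e) :
    similarityFactors d = similarityFactors e :=
  h.similarityFactors_subset.antisymm h.symm.similarityFactors_subset

lemma mul_mem_similarityFactors {d : ι → F} {c c' : F} (hc : c ∈ similarityFactors d)
    (hc' : c' ∈ similarityFactors d) : c * c' ∈ similarityFactors d := by
  have h := hc'.mul_left c
  simp only [← mul_assoc] at h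
  exact h.trans hc

lemma sq_mem_similarityFactors (d : ι → F) {s : F} (hs : s ≠ 0) :
    s ^ 2 ∈ similarityFactors d :=
  isometric_sq_mul hs d

lemma inv_mem_similarityFactors {d : ι → F} {c : F} (hc : c ∈ similarityFactors d)
    (hc0 : c ≠ 0) : c⁻¹ ∈ similarityFactors d := by
  have h := mul_mem_similarityFactors hc (sq_mem_similarityFactors d (inv_ne_zero hc0))
  rwa [sq, ← mul_assoc, mul_inv_cancel₀ hc0, one_mul] at h

lemma similarityFactors_subset_mul_left (d : ι → F) (t : F) :
    similarityFactors d ⊆ similarityFactors (fun i => t * d i) := by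
  intro c hc
  have h := hc.mul_left t
  simp only [mul_left_comm t c] at h
  exact h

lemma similarityFactors_inter_subset_sumForm (d : ι → F) (e : κ → F) :
    similarityFactors d ∩ similarityFactors e ⊆ similarityFactors (sumForm d e) := by
  rintro c ⟨hd, he⟩
  show Isometric (fun p => c * sumForm d e p) _
  convert hd.sumForm he using 1
  funext p
  rcases p with i | k <;> rfl

/-- `⟨1, t⟩ ⊗ d`. -/
def double (d : ι → F) (t : F) : ι ⊕ ι → F :=
  sumForm d (fun i => t * d i)

lemma similarityFactors_subset_double (d : ι → F) (t : F) :
    similarityFactors d ⊆ similarityFactors (double d t) := fun _ hc =>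
  similarityFactors_inter_subset_sumForm _ _ ⟨hc, similarityFactors_subset_mul_left d t hc⟩

lemma mem_similarityFactors_double {t : F} (ht : t ≠ 0) (d : ι → F) :
    t ∈ similarityFactors (double d t) := by
  have h : Isometric (sumForm (fun i => t * d i) (fun i => t ^ 2 * d i))
      (sumForm (fun i => t * d i) d) :=
    (Isometric.refl _).sumForm (isometric_sq_mul ht d)
  show Isometric (fun p => t * double d t p) (sumForm d (fun i => t * d i))
  convert h.trans (isometric_sumForm_comm _ _) using 1
  funext p
  rcases p with i | i
  · rfl
  · simp only [double, sumForm, Sum.elim_inr]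
    ring

lemma Isometric.double_mul {d : ι → F} {s : F} (hs : s ∈ similarityFactors d) (t : F) :
    Isometric (double d (t * s)) (double d t) := by
  refine (Isometric.refl d).sumForm ?_
  simp only [mul_assoc]
  exact hs.mul_left t

/-- `(x, y) ↦ (x - t y, x + y)` on each pair of coordinates; it carries `(1 + t)(d ⊥ t d)` to
`d ⊥ t d`. -/
def doubleTwist (σ : Type*) (t : F) : (σ ⊕ σ → F) →ₗ[F] (σ ⊕ σ → F) where
  toFun w := Sum.elim (fun i => w (Sum.inl i) - t * w (Sum.inr i))
    (fun i => w (Sum.inl i) + w (Sum.inr i))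
  map_add' v w := by
    ext (i | i) <;> simp only [Pi.add_apply, Sum.elim_inl, Sum.elim_inr] <;> ring
  map_smul' c w := by
    ext (i | i) <;> simp only [Pi.smul_apply, smul_eq_mul, Sum.elim_inl, Sum.elim_inr,
      RingHom.id_apply] <;> ring

lemma doubleTwist_injective {σ : Type*} {t : F} (ht : 1 + t ≠ 0) :
    Function.Injective (doubleTwist σ t) := by
  rw [← LinearMap.ker_eq_bot, LinearMap.ker_eq_bot']
  intro w hw
  have hx i := congrFun hw (Sum.inl i)
  have hy i := congrFun hw (Sum.inr i)
  simp only [doubleTwist, LinearMap.coe_mk, AddHom.coe_mk, Sum.elim_inl, Sum.elim_inr,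
    Pi.zero_apply] at hx hy
  have hr i : w (Sum.inr i) = 0 := by
    have : (1 + t) * w (Sum.inr i) = 0 := by linear_combination hy i - hx i
    simpa [ht] using this
  funext p
  rcases p with i | i
  · simpa [hr i] using hy i
  · exact hr i

lemma one_add_mem_similarityFactors_double (d : ι → F) {t : F} (ht : 1 + t ≠ 0) :
    1 + t ∈ similarityFactors (double d t) := by
  refine ⟨LinearEquiv.ofInjectiveEndo _ (doubleTwist_injective ht), fun w => ?_⟩
  rw [qval_mul_left, LinearEquiv.coe_ofInjectiveEndo, double, qval_sumForm, qval_sumForm]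
  simp only [qval, mul_add, Finset.mul_sum, ← Finset.sum_add_distrib]
  refine Finset.sum_congr rfl fun i _ => ?_
  simp [doubleTwist]
  ring

def IsRound (d : ι → F) : Prop :=
  ∀ v, qval d v ≠ 0 → qval d v ∈ similarityFactors d

lemma IsRound.of_isometric {d : ι → F} {e : κ → F} (h : Isometric d e) (hd : IsRound d) :
    IsRound e := by
  intro w hw
  obtain ⟨v, hv⟩ := h.exists_qval_eq w
  rw [← hv, ← h.similarityFactors_eq]
  exact hd v (hv ▸ hw)

lemma IsRound.double {d : ι → F} (hd : IsRound d) (t : F) : IsRound (QF.double d t) := by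
  intro w hw
  have hsplit : qval (QF.double d t) w = qval d (w ∘ Sum.inl) + t * qval d (w ∘ Sum.inr) := by
    rw [QF.double, qval_sumForm, qval_mul_left]
  rw [hsplit] at hw ⊢
  set b := qval d (w ∘ Sum.inl)
  set e := qval d (w ∘ Sum.inr)
  by_cases hb : b = 0
  · rw [hb, zero_add] at hw ⊢
    exact mul_mem_similarityFactors (mem_similarityFactors_double (left_ne_zero_of_mul hw) d)
      (similarityFactors_subset_double d t (hd _ (right_ne_zero_of_mul hw)))
  by_cases hte : t * e = 0
  · rw [hte, add_zero]
    exact similarityFactors_subset_double d t (hd _ hb)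
  have hs : e * b⁻¹ ∈ similarityFactors d := mul_mem_similarityFactors
    (hd _ (right_ne_zero_of_mul hte)) (inv_mem_similarityFactors (hd _ hb) hb)
  have hfactor : b + t * e = b * (1 + t * (e * b⁻¹)) := by field_simp
  rw [hfactor] at hw ⊢
  rw [← (Isometric.double_mul hs t).similarityFactors_eq]
  exact mul_mem_similarityFactors (similarityFactors_subset_double _ _ (hd _ hb))
    (one_add_mem_similarityFactors_double d (right_ne_zero_of_mul hw))

lemma IsRound.mem_similarityFactors {d : ι → F} (hd : IsRound d) {x : F} {u z : ι → F}
    (hx : x ≠ 0) (hz : qval d z ≠ 0) (h : qval d u = x * qval d z) :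
    x ∈ similarityFactors d := by
  have hxz : x = qval d u * (qval d z)⁻¹ := by rw [h]; field_simp
  rw [hxz]
  exact mul_mem_similarityFactors (hd u (h ▸ mul_ne_zero hx hz))
    (inv_mem_similarityFactors (hd z hz) hz)

noncomputable def finsetFinSuccEquiv (ℓ : ℕ) :
    Finset (Fin (ℓ + 1)) ≃ Finset (Fin ℓ) ⊕ Finset (Fin ℓ) where
  toFun S := if 0 ∈ S then .inr (S.preimage Fin.succ (Fin.succ_injective ℓ).injOn)
    else .inl (S.preimage Fin.succ (Fin.succ_injective ℓ).injOn)
  invFun := Sum.elim (·.map (Fin.succEmb ℓ)) (insert 0 <| ·.map (Fin.succEmb ℓ))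
  left_inv S := by
    by_cases h : 0 ∈ S <;> ext i <;> cases i using Fin.cases <;> simp [h, Fin.succ_ne_zero]
  right_inv T := by
    rcases T with T | T <;> simp [Fin.succ_ne_zero, Finset.ext_iff]

lemma pfister_finsetFinSuccEquiv_symm {ℓ : ℕ} (a : Fin (ℓ + 1) → F)
    (p : Finset (Fin ℓ) ⊕ Finset (Fin ℓ)) :
    pfister a ((finsetFinSuccEquiv ℓ).symm p) =
      sumForm (pfister (fun i => a i.succ)) (fun T => a 0 * pfister (fun i => a i.succ) T) p := by
  rcases p with T | T <;> simp [finsetFinSuccEquiv, pfister, sumForm, Fin.succ_ne_zero]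

lemma isometric_double_pfister_succ {ℓ : ℕ} (a : Fin (ℓ + 1) → F) :
    Isometric (double (pfister (fun i => a i.succ)) (a 0)) (pfister a) := by
  convert isometric_comp_equiv (finsetFinSuccEquiv ℓ).symm (pfister a) using 1
  funext p
  exact (pfister_finsetFinSuccEquiv_symm a p).symm

lemma isRound_pfister : ∀ {ℓ : ℕ} (a : Fin ℓ → F), IsRound (pfister a)
  | 0, a => fun w hw => by
    have hval : qval (pfister a) w = w ∅ ^ 2 := by
      simp [qval, pfister, Finset.eq_empty_of_isEmpty]
    rw [hval] at hw ⊢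
    exact sq_mem_similarityFactors _ (pow_ne_zero_iff two_ne_zero |>.mp hw)
  | _ + 1, a => ((isRound_pfister _).double (a 0)).of_isometric (isometric_double_pfister_succ a)

lemma Torsion.comp_equiv (e : ι ≃ κ) {d : κ → F} (h : Torsion d) : Torsion (fun i => d (e i)) := by
  obtain ⟨k, hk, m, hm⟩ := h
  exact ⟨k, hk, m, (isometric_comp_equiv (Equiv.prodCongr (Equiv.refl _) e) (copies k d)).trans hm⟩

lemma card_le_uInv {d : ι → F} (han : Anisotropic d) (ht : Torsion d) :
    (Fintype.card ι : ℕ∞) ≤ uInv F := by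
  let e := (Fintype.equivFin ι).symm
  exact le_sSup ⟨_, fun j => d (e j), (isometric_comp_equiv e d).anisotropic han,
    ht.comp_equiv e, rfl⟩

lemma Torsion.isotropic_of_uInv_lt {d : ι → F} (ht : Torsion d) (h : uInv F < Fintype.card ι) :
    Isotropic d := by
  by_contra han
  exact (card_le_uInv han ht).not_gt h

lemma Anisotropic.exists_qval_eq_mul {d : ι → F} (han : Anisotropic d) {x : F}
    (hiso : Isotropic (sumForm d (fun i => -x * d i))) :
    ∃ u z : ι → F, qval d z ≠ 0 ∧ qval d u = x * qval d z := by
  obtain ⟨w, hw, hq⟩ := hiso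
  rw [qval_sumForm, qval_mul_left] at hq
  refine ⟨w ∘ Sum.inl, w ∘ Sum.inr, fun hz => hw ?_, by linear_combination hq⟩
  have hu : w ∘ Sum.inl = 0 := han.eq_zero (by rwa [hz, mul_zero, add_zero] at hq)
  ext (i | i)
  · exact congrFun hu i
  · exact congrFun (han.eq_zero hz) i

end QF

theorem stmt16_general (F : Type*) [Field F] (n : ℕ)
    (hu : QF.uInv F = ((2 ^ (n + 1) : ℕ) : ℕ∞))
    (a : Fin (n + 1) → F)
    (haniso : QF.Anisotropic (QF.pfister a))
    (hπtor : ∀ x : F, x ≠ 0 →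
      QF.Torsion (QF.sumForm (QF.pfister a) (fun S => -x * QF.pfister a S))) :
    ∀ x : F, x ≠ 0 → QF.Isometric (fun S => x * QF.pfister a S) (QF.pfister a) := by
  intro x hx
  have hdim : QF.uInv F < Fintype.card (Finset (Fin (n + 1)) ⊕ Finset (Fin (n + 1))) := by
    rw [hu, Fintype.card_sum, Fintype.card_finset, Fintype.card_fin, ← two_mul, ← pow_succ']
    exact_mod_cast Nat.pow_lt_pow_right one_lt_two (Nat.lt_succ_self _)
  obtain ⟨u, z, hz, hxz⟩ :=
    haniso.exists_qval_eq_mul ((hπtor x hx).isotropic_of_uInv_lt hdim)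
  exact (QF.isRound_pfister a).mem_similarityFactors hx hz hxz

/-- If `u(F) = 2^(n+1)`, every torsion `(n+2)`-fold Pfister form is
hyperbolic, and `π` is an anisotropic `(n+1)`-fold Pfister form with `π ⊥ -xπ` torsion
for all `x ∈ F*`, then `xπ ≅ π` for all `x ∈ F*`. -/
theorem stmt16 (F : Type*) [Field F] (hchar : (2 : F) ≠ 0) (n : ℕ)
    (hu : QF.uInv F = ((2 ^ (n + 1) : ℕ) : ℕ∞))
    (htor : ∀ b : Fin (n + 2) → F, (∀ i, b i ≠ 0) →
      QF.Torsion (QF.pfister b) → QF.Hyperbolic (QF.pfister b))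
    (a : Fin (n + 1) → F) (ha : ∀ i, a i ≠ 0)
    (haniso : QF.Anisotropic (QF.pfister a))
    (hπtor : ∀ x : F, x ≠ 0 →
      QF.Torsion (QF.sumForm (QF.pfister a) (fun S => -x * QF.pfister a S))) :
    ∀ x : F, x ≠ 0 → QF.Isometric (fun S => x * QF.pfister a S) (QF.pfister a) :=
  stmt16_general F n hu a haniso hπtor
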